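/- arXiv:2012.05677 — 4 statements merged into one kernel-verified Lean document; each statement's English description precedes it below -/
import Mathlib

section
/- Let (Ω,𝓕,P) be a probability space, X a random element of a measurable space S, δ a {0,1}-valued random variable, and a:S→ℝ^m a bounded measurable map; write A = a(X). Let π:S→ℝ be measurable such that π(X) is a version of E[δ | σ(X)] and π(X) ≥ ε almost surely for some constant ε > 0, and let τ̃:S→ℝ be measurable with c₁ ≤ τ̃(X) ≤ c₂ almost surely for constants 0 < c₁ ≤ c₂. If the m×m matrix M = E[δ τ̃(X)^{-1} A Aᵀ] is invertible, then E[A]ᵀ M^{-1} E[A] ≤ E[δ τ̃(X) π(X)^{-2}]. (This is the paper's asymptotic variance comparison V ≤ V_b, i.e. the proposed estimator's asymptotic variance σ² is no larger than the asymptotic variance σ_b² of the augmented inverse probability weighted estimator.) -/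
open MeasureTheory Matrix

/-- Auxiliary: integrability of an a.e.-bounded measurable real function on a finite measure. -/
lemma integrable_of_ae_bound' {Ω : Type*} [MeasurableSpace Ω] {μ : Measure Ω}
    [IsFiniteMeasure μ] {f : Ω → ℝ} (hf : Measurable f) {B : ℝ}
    (hb : ∀ᵐ ω ∂μ, |f ω| ≤ B) : Integrable f μ :=
  Integrable.mono' (integrable_const B) hf.aestronglyMeasurable hb

/-- Asymptotic variance comparison `V ≤ V_b`: with `A = a(X)` bounded, `π(X)` a version of
`E[δ | σ(X)]` bounded below, `τ̃(X)` bounded away from `0` and `∞`, and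
`M = E[δ τ̃(X)⁻¹ A Aᵀ]` invertible, one has `E[A]ᵀ M⁻¹ E[A] ≤ E[δ τ̃(X) π(X)⁻²]`. -/
theorem variance_comparison
    {Ω : Type*} [MeasurableSpace Ω] (μ : Measure Ω) [IsProbabilityMeasure μ]
    {S : Type*} [MeasurableSpace S] (X : Ω → S) (hX : Measurable X)
    (δ : Ω → ℝ) (hδmeas : Measurable δ) (hδ01 : ∀ ω, δ ω = 0 ∨ δ ω = 1)
    {m : ℕ} (a : S → (Fin m → ℝ)) (ha : Measurable a)
    (C : ℝ) (haC : ∀ s i, |a s i| ≤ C)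
    (π : S → ℝ) (hπ : Measurable π)
    (hπver : μ[δ | MeasurableSpace.comap X inferInstance] =ᵐ[μ] fun ω => π (X ω))
    (ε : ℝ) (hε : 0 < ε) (hπε : ∀ᵐ ω ∂μ, ε ≤ π (X ω))
    (τt : S → ℝ) (hτt : Measurable τt)
    (c₁ c₂ : ℝ) (hc₁ : 0 < c₁) (hc₁₂ : c₁ ≤ c₂)
    (hτb : ∀ᵐ ω ∂μ, τt (X ω) ∈ Set.Icc c₁ c₂)
    (M : Matrix (Fin m) (Fin m) ℝ)
    (hM : ∀ i j, M i j = ∫ ω, δ ω * (τt (X ω))⁻¹ * (a (X ω) i * a (X ω) j) ∂μ)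
    (hMinv : IsUnit M.det) :
    (fun i => ∫ ω, a (X ω) i ∂μ) ⬝ᵥ (M⁻¹ *ᵥ fun i => ∫ ω, a (X ω) i ∂μ)
      ≤ ∫ ω, δ ω * τt (X ω) / (π (X ω)) ^ 2 ∂μ := by
  classical
  have h𝓖 : MeasurableSpace.comap X inferInstance ≤ ‹MeasurableSpace Ω› := hX.comap_le
  set u : Fin m → ℝ := fun i => ∫ ω, a (X ω) i ∂μ with hu
  set v : Fin m → ℝ := M⁻¹ *ᵥ u with hv
  -- basic bounds and measurability
  have hδb : ∀ ω, 0 ≤ δ ω ∧ δ ω ≤ 1 := by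
    intro ω; rcases hδ01 ω with h | h <;> simp [h]
  have haC' : ∀ s i, |a s i| ≤ |C| := fun s i => (haC s i).trans (le_abs_self C)
  have haX : ∀ i, Measurable fun ω => a (X ω) i :=
    fun i => (measurable_pi_apply i).comp (ha.comp hX)
  have hτX : Measurable fun ω => τt (X ω) := hτt.comp hX
  have hπX : Measurable fun ω => π (X ω) := hπ.comp hX
  set B : Ω → ℝ := fun ω => ∑ i, v i * a (X ω) i with hBdef
  have hBmeas : Measurable B :=
    Finset.measurable_sum _ fun i _ => (haX i).const_mul _
  set K : ℝ := (∑ i, |v i|) * |C| with hK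
  have hK0 : 0 ≤ K := by
    apply mul_nonneg (Finset.sum_nonneg fun i _ => abs_nonneg _) (abs_nonneg _)
  have hBK : ∀ ω, |B ω| ≤ K := by
    intro ω
    calc |B ω| ≤ ∑ i, |v i * a (X ω) i| := Finset.abs_sum_le_sum_abs _ _
    _ ≤ ∑ i, |v i| * |C| := by
        refine Finset.sum_le_sum fun i _ => ?_
        rw [abs_mul]
        exact mul_le_mul_of_nonneg_left (haC' _ i) (abs_nonneg _)
    _ = K := by rw [hK, Finset.sum_mul]
  -- integrability facts
  have intδ : Integrable δ μ :=
    integrable_of_ae_bound' hδmeas (Filter.Eventually.of_forall fun ω => by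
      rw [abs_le]; exact ⟨by linarith [(hδb ω).1], (hδb ω).2⟩)
  have intaX : ∀ i, Integrable (fun ω => a (X ω) i) μ :=
    fun i => integrable_of_ae_bound' (haX i) (Filter.Eventually.of_forall fun ω => haC' _ i)
  have intf3 : ∀ i j, Integrable
      (fun ω => δ ω * (τt (X ω))⁻¹ * (a (X ω) i * a (X ω) j)) μ := by
    intro i j
    refine integrable_of_ae_bound'
      ((hδmeas.mul hτX.inv).mul ((haX i).mul (haX j))) (B := c₁⁻¹ * (|C| * |C|)) ?_
    filter_upwards [hτb] with ω hτ
    have hτ0 : 0 < τt (X ω) := lt_of_lt_of_le hc₁ hτ.1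
    have h1 : |(τt (X ω))⁻¹| ≤ c₁⁻¹ := by
      rw [abs_of_nonneg (inv_nonneg.mpr hτ0.le)]
      exact inv_anti₀ hc₁ hτ.1
    have hδ1 : |δ ω| ≤ 1 := by
      rw [abs_le]; exact ⟨by linarith [(hδb ω).1], (hδb ω).2⟩
    calc |δ ω * (τt (X ω))⁻¹ * (a (X ω) i * a (X ω) j)|
        = |δ ω| * |(τt (X ω))⁻¹| * (|a (X ω) i| * |a (X ω) j|) := by
          rw [abs_mul, abs_mul, abs_mul]
      _ ≤ 1 * c₁⁻¹ * (|C| * |C|) := by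
          refine mul_le_mul (mul_le_mul hδ1 h1 (abs_nonneg _) zero_le_one)
            (mul_le_mul (haC' _ i) (haC' _ j) (abs_nonneg _)
              (abs_nonneg C))
            (mul_nonneg (abs_nonneg _) (abs_nonneg _)) (by positivity)
      _ = c₁⁻¹ * (|C| * |C|) := by ring
  have intB : Integrable B μ :=
    integrable_of_ae_bound' hBmeas (Filter.Eventually.of_forall hBK)
  -- f₂ := δ * (B / π)
  have intf2 : Integrable (fun ω => δ ω * (B ω / π (X ω))) μ := by
    refine integrable_of_ae_bound' (hδmeas.mul (hBmeas.div hπX)) (B := K / ε) ?_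
    filter_upwards [hπε] with ω hπω
    have hπ0 : 0 < π (X ω) := lt_of_lt_of_le hε hπω
    have hδ1 : |δ ω| ≤ 1 := by
      rw [abs_le]; exact ⟨by linarith [(hδb ω).1], (hδb ω).2⟩
    have hdiv : |B ω| / |π (X ω)| ≤ K / ε :=
      div_le_div₀ hK0 (hBK ω) hε (by rw [abs_of_pos hπ0]; exact hπω)
    calc |δ ω * (B ω / π (X ω))| = |δ ω| * (|B ω| / |π (X ω)|) := by
          rw [abs_mul, abs_div]
      _ ≤ 1 * (K / ε) :=
          mul_le_mul hδ1 hdiv (div_nonneg (abs_nonneg _) (abs_nonneg _)) zero_le_one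
      _ = K / ε := one_mul _
  -- f₁ := δ * τ / π²
  have intf1 : Integrable (fun ω => δ ω * τt (X ω) / (π (X ω)) ^ 2) μ := by
    refine integrable_of_ae_bound' ((hδmeas.mul hτX).div (hπX.pow_const 2)) (B := c₂ / ε ^ 2) ?_
    filter_upwards [hπε, hτb] with ω hπω hτω
    have hπ0 : 0 < π (X ω) := lt_of_lt_of_le hε hπω
    have hτ0 : 0 < τt (X ω) := lt_of_lt_of_le hc₁ hτω.1
    have hc₂ : (0:ℝ) < c₂ := lt_of_lt_of_le hc₁ hc₁₂
    have hδ1 : |δ ω| ≤ 1 := by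
      rw [abs_le]; exact ⟨by linarith [(hδb ω).1], (hδb ω).2⟩
    have hτle : |τt (X ω)| ≤ c₂ := by rw [abs_of_pos hτ0]; exact hτω.2
    have hπsq : ε ^ 2 ≤ |(π (X ω)) ^ 2| := by
      calc ε ^ 2 ≤ (π (X ω)) ^ 2 := pow_le_pow_left₀ hε.le hπω 2
        _ ≤ |(π (X ω)) ^ 2| := le_abs_self _
    calc |δ ω * τt (X ω) / (π (X ω)) ^ 2| = |δ ω| * |τt (X ω)| / |(π (X ω)) ^ 2| := by
          rw [abs_div, abs_mul]
      _ ≤ 1 * c₂ / ε ^ 2 :=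
          div_le_div₀ (by positivity)
            (mul_le_mul hδ1 hτle (abs_nonneg _) zero_le_one)
            (by positivity) hπsq
      _ = c₂ / ε ^ 2 := by ring
  -- f₃ := δ * τ⁻¹ * B²
  have hptB : ∀ ω, δ ω * (τt (X ω))⁻¹ * B ω ^ 2
      = ∑ i, ∑ j, v i * v j * (δ ω * (τt (X ω))⁻¹ * (a (X ω) i * a (X ω) j)) := by
    intro ω
    rw [hBdef]
    simp only [sq]
    rw [Finset.sum_mul_sum, Finset.mul_sum]
    refine Finset.sum_congr rfl fun i _ => ?_
    rw [Finset.mul_sum]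
    exact Finset.sum_congr rfl fun j _ => by ring
  have intf3' : Integrable (fun ω => δ ω * (τt (X ω))⁻¹ * B ω ^ 2) μ := by
    have : (fun ω => δ ω * (τt (X ω))⁻¹ * B ω ^ 2)
        = fun ω => ∑ i, ∑ j, v i * v j * (δ ω * (τt (X ω))⁻¹ * (a (X ω) i * a (X ω) j)) := by
      funext ω; exact hptB ω
    rw [this]
    exact integrable_finset_sum _ fun i _ =>
      integrable_finset_sum _ fun j _ => (intf3 i j).const_mul _
  -- Step (1): M *ᵥ v = u
  have hMv : M *ᵥ v = u := by
    rw [hv, mulVec_mulVec, Matrix.mul_nonsing_inv _ hMinv, one_mulVec]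
  -- Step (2): ∫ δ τ⁻¹ B² = u ⬝ᵥ v
  have hQ3 : ∫ ω, δ ω * (τt (X ω))⁻¹ * B ω ^ 2 ∂μ = u ⬝ᵥ v := by
    have h1 : ∫ ω, δ ω * (τt (X ω))⁻¹ * B ω ^ 2 ∂μ = ∑ i, ∑ j, v i * v j * M i j := by
      simp_rw [hptB]
      rw [integral_finset_sum _ (fun i _ =>
        integrable_finset_sum _ fun j _ => (intf3 i j).const_mul _)]
      refine Finset.sum_congr rfl fun i _ => ?_
      rw [integral_finset_sum _ (fun j _ => (intf3 i j).const_mul _)]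
      refine Finset.sum_congr rfl fun j _ => ?_
      rw [integral_const_mul, hM]
    rw [h1, dotProduct_comm, ← hMv]
    simp only [dotProduct, mulVec, Finset.mul_sum]
    exact Finset.sum_congr rfl fun i _ => Finset.sum_congr rfl fun j _ => by ring
  -- Step (3): conditional expectation: ∫ δ (B/π) = u ⬝ᵥ v
  have hQ2 : ∫ ω, δ ω * (B ω / π (X ω)) ∂μ = u ⬝ᵥ v := by
    set G : Ω → ℝ := fun ω => B ω / π (X ω) with hGdef
    have hg : Measurable fun s => (∑ i, v i * a s i) / π s :=
      (Finset.measurable_sum _ fun i _ => (measurable_pi_apply i).comp ha |>.const_mul _).div hπ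
    have hG𝓖 : StronglyMeasurable[MeasurableSpace.comap X inferInstance] G := by
      have hXm : Measurable[MeasurableSpace.comap X inferInstance] X :=
        measurable_iff_comap_le.mpr le_rfl
      exact (hg.comp hXm).stronglyMeasurable
    have intGδ : Integrable (G * δ) μ := by
      have : G * δ = fun ω => δ ω * (B ω / π (X ω)) := by
        funext ω; simp only [Pi.mul_apply]; ring
      rw [this]; exact intf2
    have key : ∫ ω, (G * δ) ω ∂μ = ∫ ω, G ω * π (X ω) ∂μ := by
      have h1 := condExp_mul_of_stronglyMeasurable_left hG𝓖 intGδ intδ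
      calc ∫ ω, (G * δ) ω ∂μ
          = ∫ ω, (μ[G * δ | MeasurableSpace.comap X inferInstance]) ω ∂μ :=
            (integral_condExp h𝓖).symm
        _ = ∫ ω, G ω * π (X ω) ∂μ := by
            refine integral_congr_ae (h1.trans ?_)
            filter_upwards [hπver] with ω hω
            simp only [Pi.mul_apply, hω]
    have h2 : ∫ ω, G ω * π (X ω) ∂μ = ∫ ω, B ω ∂μ := by
      refine integral_congr_ae ?_
      filter_upwards [hπε] with ω hω
      have hπ0 : π (X ω) ≠ 0 := ne_of_gt (lt_of_lt_of_le hε hω)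
      exact div_mul_cancel₀ _ hπ0
    have h3 : ∫ ω, B ω ∂μ = u ⬝ᵥ v := by
      rw [hBdef]
      rw [integral_finset_sum _ (fun i _ => (intaX i).const_mul _)]
      rw [dotProduct_comm]
      simp only [dotProduct]
      exact Finset.sum_congr rfl fun i _ => integral_const_mul _ _
    have h4 : ∫ ω, δ ω * (B ω / π (X ω)) ∂μ = ∫ ω, (G * δ) ω ∂μ := by
      refine integral_congr_ae (Filter.Eventually.of_forall fun ω => ?_)
      simp only [Pi.mul_apply]; ring
    rw [h4, key, h2, h3]
  -- Step (4): expansion of the nonnegative square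
  set E : Ω → ℝ :=
    fun ω => δ ω * (τt (X ω))⁻¹ * (τt (X ω) / π (X ω) - B ω) ^ 2 with hEdef
  have hEnn : 0 ≤ ∫ ω, E ω ∂μ := by
    refine integral_nonneg_of_ae ?_
    filter_upwards [hτb] with ω hτω
    have hτ0 : 0 < τt (X ω) := lt_of_lt_of_le hc₁ hτω.1
    exact mul_nonneg (mul_nonneg (hδb ω).1 (inv_nonneg.mpr (le_of_lt hτ0))) (sq_nonneg _)
  have hEeq : ∀ᵐ ω ∂μ, E ω = δ ω * τt (X ω) / (π (X ω)) ^ 2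
      - 2 * (δ ω * (B ω / π (X ω))) + δ ω * (τt (X ω))⁻¹ * B ω ^ 2 := by
    filter_upwards [hτb, hπε] with ω hτω hπω
    have hτ0 : τt (X ω) ≠ 0 := ne_of_gt (lt_of_lt_of_le hc₁ hτω.1)
    have hπ0 : π (X ω) ≠ 0 := ne_of_gt (lt_of_lt_of_le hε hπω)
    rw [hEdef]
    field_simp
    ring
  have hIE : ∫ ω, E ω ∂μ
      = (∫ ω, δ ω * τt (X ω) / (π (X ω)) ^ 2 ∂μ) - 2 * (u ⬝ᵥ v) + (u ⬝ᵥ v) := by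
    have hmul : Integrable (fun ω => 2 * (δ ω * (B ω / π (X ω)))) μ := intf2.const_mul 2
    have hsub : Integrable
        (fun ω => δ ω * τt (X ω) / (π (X ω)) ^ 2 - 2 * (δ ω * (B ω / π (X ω)))) μ :=
      intf1.sub hmul
    rw [integral_congr_ae hEeq, integral_add hsub intf3', integral_sub intf1 hmul,
      integral_const_mul, hQ2, hQ3]
  rw [hIE] at hEnn
  linarith
end

section
/- Let (X_i,Y_i,δ_i)_{i≥1} be independent and identically distributed copies of (X,Y,δ), where X takes values in a measurable space S, Y is real-valued, and δ is {0,1}-valued. Assume the missing-at-random condition: for every q ∈ ℝ, E[1{Y ≤ q} | σ(X,δ)] = E[1{Y ≤ q} | σ(X)] almost surely. Let ψ:S→ℝ be bounded measurable, and let H:ℝ×S→[0,1] be jointly measurable such that for each q ∈ ℝ, H(q,X) is a version of E[1{Y ≤ q} | σ(X)], and for each x ∈ S the map q ↦ H(q,x) is nondecreasing and continuous. Then sup_{q∈ℝ} | n^{-1} Σ_{i=1}^n δ_i ψ(X_i)(1{Y_i ≤ q} − H(q,X_i)) | → 0 almost surely as n → ∞. -/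
open MeasureTheory Filter


lemma uwep_bd2 {d p C : ℝ} (hd : |d| ≤ 1) (hp : |p| ≤ C) : |d * p| ≤ C := by
  rw [abs_mul]
  calc |d| * |p| ≤ 1 * C := mul_le_mul hd hp (abs_nonneg _) zero_le_one
  _ = C := one_mul _

lemma uwep_bd3 {d p u C : ℝ} (hd : |d| ≤ 1) (hp : |p| ≤ C) (hu : |u| ≤ 1) : |d * p * u| ≤ C := by
  rw [abs_mul]
  calc |d * p| * |u| ≤ C * 1 :=
    mul_le_mul (uwep_bd2 hd hp) hu (abs_nonneg _) ((abs_nonneg _).trans (uwep_bd2 hd hp))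
  _ = C := mul_one _

lemma uwep_div_mono {a b c : ℝ} (hab : a ≤ b) (hc : 0 ≤ c) : a / c ≤ b / c := by
  rw [div_eq_mul_inv, div_eq_mul_inv]
  exact mul_le_mul_of_nonneg_right hab (inv_nonneg.mpr hc)


lemma uwep_det (Φ : ℝ → ℝ) (M : ℝ) (F G : ℕ → ℝ → ℝ) (A : ℕ → ℝ)
    (hΦc : Continuous Φ)
    (hΦbot : Tendsto Φ atBot (nhds 0)) (hΦtop : Tendsto Φ atTop (nhds M))
    (hFmono : ∀ n, Monotone (F n)) (hGmono : ∀ n, Monotone (G n))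
    (hF0 : ∀ n q, 0 ≤ F n q) (hG0 : ∀ n q, 0 ≤ G n q)
    (hFA : ∀ n q, F n q ≤ A n) (hGA : ∀ n q, G n q ≤ A n)
    (hTF : ∀ r : ℚ, Tendsto (fun n => F n r) atTop (nhds (Φ r)))
    (hTG : ∀ r : ℚ, Tendsto (fun n => G n r) atTop (nhds (Φ r)))
    (hTA : Tendsto A atTop (nhds M))
    (ε : ℝ) (hε : 0 < ε) :
    ∀ᶠ n in atTop, ∀ q : ℝ, |F n q - G n q| ≤ ε := by
  have hε' : 0 < ε / 4 := by linarith
  set ε' := ε / 4 with hε'def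
  -- left cutoff a0
  obtain ⟨Al, hAl⟩ := eventually_atBot.mp (hΦbot.eventually (gt_mem_nhds hε'))
  obtain ⟨a0, ha0A⟩ := exists_rat_lt Al
  have ha0 : Φ a0 < ε' := hAl _ ha0A.le
  -- right cutoff b
  obtain ⟨Br, hBr⟩ := eventually_atTop.mp (hΦtop.eventually (lt_mem_nhds (by linarith : M - ε' < M)))
  obtain ⟨b, hbB⟩ := exists_rat_gt (max Br (a0 : ℝ))
  have hb1 : (a0 : ℝ) < b := (le_max_right _ _).trans_lt hbB
  have hb2 : M - Φ b < ε' := by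
    have := hBr b (((le_max_left _ _).trans_lt hbB).le)
    linarith
  -- uniform continuity on [a0, b]
  have huc := (isCompact_Icc (a := (a0:ℝ)) (b := (b:ℝ))).uniformContinuousOn_of_continuous
    hΦc.continuousOn
  rw [Metric.uniformContinuousOn_iff] at huc
  obtain ⟨d, hd0, hdp⟩ := huc ε' hε'
  -- mesh
  obtain ⟨N, hN⟩ := exists_nat_gt (((b : ℝ) - a0) / d)
  have hNpos : 0 < N := by
    have h1 : (0:ℝ) < ((b:ℝ) - a0) / d := div_pos (by linarith) hd0
    exact_mod_cast h1.trans hN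
  have hNR : (0:ℝ) < (N:ℝ) := by exact_mod_cast hNpos
  have hmesh : ((b:ℝ) - a0) / N < d := by
    rw [div_lt_iff₀ hNR]
    calc (b:ℝ) - a0 = (((b:ℝ) - a0) / d) * d := by field_simp
    _ < N * d := mul_lt_mul_of_pos_right hN hd0
    _ = d * N := mul_comm _ _
  set h : ℝ := ((b:ℝ) - a0) / N with hhdef
  have hh0 : 0 < h := div_pos (by linarith) hNR
  -- grid
  set r : ℕ → ℚ := fun j => a0 + (j : ℚ) * (b - a0) / N with hrdef
  have hr : ∀ j : ℕ, ((r j : ℝ)) = (a0 : ℝ) + j * h := by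
    intro j
    rw [hrdef, hhdef]
    push_cast
    ring
  have hr0 : r 0 = a0 := by simp [hrdef]
  have hrN : (r N : ℝ) = b := by
    rw [hr]
    have hNh : (N : ℝ) * h = (b : ℝ) - a0 := by
      rw [hhdef]; field_simp
    linarith
  have hrmem : ∀ j : ℕ, j ≤ N → (r j : ℝ) ∈ Set.Icc (a0 : ℝ) (b : ℝ) := by
    intro j hj
    rw [hr]
    constructor
    · nlinarith [hh0.le, Nat.cast_nonneg (α := ℝ) j]
    · have hjN : (j : ℝ) ≤ N := by exact_mod_cast hj
      have : (j : ℝ) * h ≤ N * h := mul_le_mul_of_nonneg_right hjN hh0.le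
      have hNh : (N : ℝ) * h = (b : ℝ) - a0 := by
        rw [hhdef]; field_simp
      linarith
  have hΦgap : ∀ j : ℕ, j + 1 ≤ N → Φ (r (j+1)) - Φ (r j) < ε' := by
    intro j hj
    have h1 := hdp (r (j+1)) (hrmem _ hj) (r j) (hrmem _ (by omega))
      (by rw [Real.dist_eq, hr, hr]
          push_cast
          rw [show (a0:ℝ) + (j+1) * h - ((a0:ℝ) + j * h) = h by ring]
          rwa [abs_of_pos hh0])
    rw [Real.dist_eq] at h1
    exact lt_of_abs_lt h1
  -- eventual accuracy at grid points
  have hev : ∀ᶠ n in atTop,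
      ((∀ j ∈ Finset.range (N+1), |F n (r j) - Φ (r j)| < ε' ∧ |G n (r j) - Φ (r j)| < ε') ∧
        |A n - M| < ε') := by
    refine Filter.Eventually.and ?_ ?_
    · rw [Filter.eventually_all_finset]
      intro j _
      refine Filter.Eventually.and ?_ ?_
      · obtain ⟨N₀, hN₀⟩ := Metric.tendsto_atTop.mp (hTF (r j)) ε' hε'
        exact eventually_atTop.mpr ⟨N₀, fun n hn => by
          have := hN₀ n hn; rwa [Real.dist_eq] at this⟩
      · obtain ⟨N₀, hN₀⟩ := Metric.tendsto_atTop.mp (hTG (r j)) ε' hε'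
        exact eventually_atTop.mpr ⟨N₀, fun n hn => by
          have := hN₀ n hn; rwa [Real.dist_eq] at this⟩
    · obtain ⟨N₀, hN₀⟩ := Metric.tendsto_atTop.mp hTA ε' hε'
      exact eventually_atTop.mpr ⟨N₀, fun n hn => by
        have := hN₀ n hn; rwa [Real.dist_eq] at this⟩
  filter_upwards [hev] with n hn
  intro q
  obtain ⟨hgrid, hA⟩ := hn
  have hAub : A n < M + ε' := by have := abs_lt.mp hA; linarith
  rcases le_total q (a0 : ℝ) with hq | hq
  · -- left tail
    have h0 := (hgrid 0 (Finset.mem_range.mpr (by omega)))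
    rw [hr0] at h0
    have hFa := abs_lt.mp h0.1
    have hGa := abs_lt.mp h0.2
    have h1 : F n q ≤ F n a0 := hFmono n hq
    have h2 : G n q ≤ G n a0 := hGmono n hq
    have h3 := hF0 n q
    have h4 := hG0 n q
    rw [abs_sub_le_iff]
    constructor <;> linarith
  rcases le_total (b : ℝ) q with hq2 | hq2
  · -- right tail
    have hN' := (hgrid N (Finset.mem_range.mpr (by omega)))
    rw [hrN] at hN'
    have hFb := abs_lt.mp hN'.1
    have hGb := abs_lt.mp hN'.2
    have h1 : F n (b : ℝ) ≤ F n q := hFmono n hq2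
    have h2 : G n (b : ℝ) ≤ G n q := hGmono n hq2
    have h3 := hFA n q
    have h4 := hGA n q
    rw [abs_sub_le_iff]
    constructor <;> linarith
  · -- middle: a0 ≤ q ≤ b
    have hj00 : (0 : ℤ) ≤ ⌊(q - a0) / h⌋ := Int.floor_nonneg.mpr (div_nonneg (by linarith) hh0.le)
    set j : ℕ := min (⌊(q - a0) / h⌋).toNat (N - 1) with hjdef
    have hjN : j + 1 ≤ N := by
      have : j ≤ N - 1 := min_le_right _ _
      omega
    have hjZ : (j : ℤ) ≤ ⌊(q - a0) / h⌋ := by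
      have h1 : j ≤ (⌊(q - a0) / h⌋).toNat := min_le_left _ _
      have h2 : ((⌊(q - a0) / h⌋).toNat : ℤ) = ⌊(q - a0) / h⌋ := Int.toNat_of_nonneg hj00
      omega
    have hlow : (r j : ℝ) ≤ q := by
      rw [hr]
      have h1 : ((j : ℤ) : ℝ) ≤ (q - a0) / h := le_trans (by exact_mod_cast hjZ) (Int.floor_le _)
      have h2 : (j : ℝ) * h ≤ q - a0 := by
        rw [← le_div_iff₀ hh0] at *
        exact_mod_cast h1
      linarith
    have hup : q ≤ (r (j+1) : ℝ) := by
      rcases le_or_gt (⌊(q - a0) / h⌋).toNat (N - 1) with hc | hc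
      · have hj : j = (⌊(q - a0) / h⌋).toNat := min_eq_left hc
        have h1 : (q - a0) / h < ⌊(q - a0) / h⌋ + 1 := Int.lt_floor_add_one _
        have h2 : ((j : ℝ)) = ((⌊(q - a0) / h⌋ : ℤ) : ℝ) := by
          rw [hj]
          exact_mod_cast congrArg (fun z : ℤ => (z : ℝ)) (Int.toNat_of_nonneg hj00)
        rw [hr]
        have h3 : (q - a0) / h < (j : ℝ) + 1 := by rw [h2]; exact_mod_cast h1
        have h4 : q - a0 < ((j : ℝ) + 1) * h := by
          rw [div_lt_iff₀ hh0] at h3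
          linarith
        push_cast
        linarith
      · have hj : j = N - 1 := min_eq_right hc.le
        have hjn : j + 1 = N := by omega
        rw [hjn, hrN]
        exact hq2
    have hgj := hgrid j (Finset.mem_range.mpr (by omega))
    have hgj1 := hgrid (j+1) (Finset.mem_range.mpr (by omega))
    have hFj := abs_lt.mp hgj.1
    have hGj := abs_lt.mp hgj.2
    have hFj1 := abs_lt.mp hgj1.1
    have hGj1 := abs_lt.mp hgj1.2
    have hΦj := hΦgap j hjN
    have h1 : F n q ≤ F n (r (j+1) : ℝ) := hFmono n hup
    have h2 : F n (r j : ℝ) ≤ F n q := hFmono n hlow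
    have h3 : G n q ≤ G n (r (j+1) : ℝ) := hGmono n hup
    have h4 : G n (r j : ℝ) ≤ G n q := hGmono n hlow
    rw [abs_sub_le_iff]
    constructor <;> linarith


section Aux
variable {Ω : Type*} [MeasurableSpace Ω] {μ : Measure Ω} [IsProbabilityMeasure μ]
variable {S : Type*} [MeasurableSpace S]

lemma uwep_slln (X : ℕ → Ω → S) (Y : ℕ → Ω → ℝ) (δ : ℕ → Ω → ℝ)
    (hmeas : ∀ i, Measurable (fun ω => (X i ω, Y i ω, δ i ω)))
    (hindep : ProbabilityTheory.iIndepFun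
      (fun i ω => (X i ω, Y i ω, δ i ω)) μ)
    (hident : ∀ i, ProbabilityTheory.IdentDistrib
      (fun ω => (X i ω, Y i ω, δ i ω)) (fun ω => (X 0 ω, Y 0 ω, δ 0 ω)) μ μ)
    (F : S × ℝ × ℝ → ℝ) (hF : Measurable F) (C : ℝ)
    (hC : ∀ ω, |F (X 0 ω, Y 0 ω, δ 0 ω)| ≤ C) :
    ∀ᵐ ω ∂μ, Tendsto (fun n : ℕ => (∑ i ∈ Finset.range n, F (X i ω, Y i ω, δ i ω)) / n)
      atTop (nhds (∫ ω, F (X 0 ω, Y 0 ω, δ 0 ω) ∂μ)) := by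
  have hint : Integrable (fun ω => F (X 0 ω, Y 0 ω, δ 0 ω)) μ := by
    refine Integrable.mono' (integrable_const C) ((hF.comp (hmeas 0)).aestronglyMeasurable) ?_
    exact Filter.Eventually.of_forall (fun ω => by simpa [Real.norm_eq_abs] using hC ω)
  have hpind : Pairwise (Function.onFun (ProbabilityTheory.IndepFun · · μ)
      (fun i ω => F (X i ω, Y i ω, δ i ω))) := by
    intro i j hij
    exact (hindep.indepFun hij).comp hF hF
  have hid : ∀ i, ProbabilityTheory.IdentDistrib (fun ω => F (X i ω, Y i ω, δ i ω))
      (fun ω => F (X 0 ω, Y 0 ω, δ 0 ω)) μ μ := fun i => (hident i).comp hF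
  exact ProbabilityTheory.strong_law_ae_real _ hint hpind hid

lemma uwep_mar (X0 : Ω → S) (Y0 : Ω → ℝ) (δ0 : Ω → ℝ)
    (hm : Measurable (fun ω => (X0 ω, Y0 ω, δ0 ω)))
    (ψ : S → ℝ) (hψmeas : Measurable ψ)
    (H : ℝ → S → ℝ) (q : ℝ)
    (hMARq : μ[fun ω => if Y0 ω ≤ q then (1 : ℝ) else 0 |
          MeasurableSpace.comap (fun ω => (X0 ω, δ0 ω)) inferInstance]
        =ᵐ[μ] μ[fun ω => if Y0 ω ≤ q then (1 : ℝ) else 0 |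
          MeasurableSpace.comap X0 inferInstance])
    (hverq : μ[fun ω => if Y0 ω ≤ q then (1 : ℝ) else 0 |
          MeasurableSpace.comap X0 inferInstance]
        =ᵐ[μ] fun ω => H q (X0 ω))
    (hδ : ∀ ω, |δ0 ω| ≤ 1) (Cψ : ℝ) (hψb : ∀ x, |ψ x| ≤ Cψ) :
    ∫ ω, δ0 ω * ψ (X0 ω) * (if Y0 ω ≤ q then (1:ℝ) else 0) ∂μ
      = ∫ ω, δ0 ω * ψ (X0 ω) * H q (X0 ω) ∂μ := by
  have hX0 : Measurable X0 := hm.fst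
  have hY0 : Measurable Y0 := hm.snd.fst
  have hδ0 : Measurable δ0 := hm.snd.snd
  have hpair : Measurable (fun ω => (X0 ω, δ0 ω)) := hX0.prodMk hδ0
  have hm2 : MeasurableSpace.comap (fun ω => (X0 ω, δ0 ω)) inferInstance
      ≤ ‹MeasurableSpace Ω› := measurable_iff_comap_le.mp hpair
  set a : Ω → ℝ := fun ω => δ0 ω * ψ (X0 ω) with hadef
  set ind : Ω → ℝ := fun ω => if Y0 ω ≤ q then (1:ℝ) else 0 with hinddef
  have ha_sm : StronglyMeasurable[MeasurableSpace.comap (fun ω => (X0 ω, δ0 ω)) inferInstance] a := by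
    have h1 : Measurable[MeasurableSpace.comap (fun ω => (X0 ω, δ0 ω)) inferInstance]
        (fun ω => (X0 ω, δ0 ω)) := comap_measurable _
    exact ((measurable_snd.comp h1).mul (hψmeas.comp (measurable_fst.comp h1))).stronglyMeasurable
  have hind_meas : Measurable ind :=
    Measurable.ite (measurableSet_le hY0 measurable_const) measurable_const measurable_const
  have hind_bd : ∀ ω, |ind ω| ≤ 1 := by
    intro ω; simp only [hinddef]; split <;> simp
  have hind_int : Integrable ind μ := by
    refine Integrable.mono' (integrable_const 1) hind_meas.aestronglyMeasurable ?_
    exact Filter.Eventually.of_forall (fun ω => by simpa [Real.norm_eq_abs] using hind_bd ω)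
  have ha_bd : ∀ ω, |a ω| ≤ Cψ := by
    intro ω
    calc |a ω| = |δ0 ω| * |ψ (X0 ω)| := abs_mul _ _
    _ ≤ 1 * |ψ (X0 ω)| := mul_le_mul_of_nonneg_right (hδ ω) (abs_nonneg _)
    _ = |ψ (X0 ω)| := one_mul _
    _ ≤ Cψ := hψb _
  have hmul_int : Integrable (a * ind) μ := by
    refine Integrable.mono' (integrable_const Cψ)
      (((hδ0.mul (hψmeas.comp hX0)).mul hind_meas).aestronglyMeasurable) ?_
    refine Filter.Eventually.of_forall (fun ω => ?_)
    have : |a ω * ind ω| ≤ Cψ := by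
      calc |a ω * ind ω| = |a ω| * |ind ω| := abs_mul _ _
      _ ≤ Cψ * 1 := mul_le_mul (ha_bd ω) (hind_bd ω) (abs_nonneg _)
          ((abs_nonneg _).trans (ha_bd ω))
      _ = Cψ := mul_one _
    simpa [Real.norm_eq_abs, abs_mul] using this
  have hpull : μ[a * ind | MeasurableSpace.comap (fun ω => (X0 ω, δ0 ω)) inferInstance]
      =ᵐ[μ] fun ω => a ω * H q (X0 ω) := by
    refine (condExp_mul_of_stronglyMeasurable_left ha_sm hmul_int hind_int).trans ?_
    filter_upwards [hMARq, hverq] with ω h2 h3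
    simp only [Pi.mul_apply]
    rw [h2, h3]
  calc ∫ ω, δ0 ω * ψ (X0 ω) * ind ω ∂μ = ∫ ω, (a * ind) ω ∂μ := by rfl
  _ = ∫ ω, (μ[a * ind | MeasurableSpace.comap (fun ω => (X0 ω, δ0 ω)) inferInstance]) ω ∂μ :=
      (integral_condExp hm2).symm
  _ = ∫ ω, a ω * H q (X0 ω) ∂μ := integral_congr_ae hpull

end Aux

lemma uwep_nonneg
    {Ω : Type*} [MeasurableSpace Ω] (μ : Measure Ω) [IsProbabilityMeasure μ]
    {S : Type*} [MeasurableSpace S]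
    (X : ℕ → Ω → S) (Y : ℕ → Ω → ℝ) (δ : ℕ → Ω → ℝ)
    (hmeas : ∀ i, Measurable (fun ω => (X i ω, Y i ω, δ i ω)))
    (hindep : ProbabilityTheory.iIndepFun
      (fun i ω => (X i ω, Y i ω, δ i ω)) μ)
    (hident : ∀ i, ProbabilityTheory.IdentDistrib
      (fun ω => (X i ω, Y i ω, δ i ω)) (fun ω => (X 0 ω, Y 0 ω, δ 0 ω)) μ μ)
    (hδ01 : ∀ i ω, δ i ω = 0 ∨ δ i ω = 1)
    (hMAR : ∀ q : ℝ,
      μ[fun ω => if Y 0 ω ≤ q then (1 : ℝ) else 0 |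
          MeasurableSpace.comap (fun ω => (X 0 ω, δ 0 ω)) inferInstance]
        =ᵐ[μ] μ[fun ω => if Y 0 ω ≤ q then (1 : ℝ) else 0 |
          MeasurableSpace.comap (X 0) inferInstance])
    (ψ : S → ℝ) (hψmeas : Measurable ψ) (Cψ : ℝ) (hψbdd : ∀ x, |ψ x| ≤ Cψ)
    (hψ0 : ∀ x, 0 ≤ ψ x)
    (H : ℝ → S → ℝ) (hHmeas : Measurable (Function.uncurry H))
    (hH01 : ∀ q x, H q x ∈ Set.Icc (0 : ℝ) 1)
    (hver : ∀ q : ℝ,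
      μ[fun ω => if Y 0 ω ≤ q then (1 : ℝ) else 0 | MeasurableSpace.comap (X 0) inferInstance]
        =ᵐ[μ] fun ω => H q (X 0 ω))
    (hmono : ∀ x, Monotone (fun q => H q x))
    (hcont : ∀ x, Continuous (fun q => H q x)) :
    ∀ᵐ ω ∂μ, ∀ ε : ℝ, 0 < ε → ∀ᶠ n : ℕ in atTop, ∀ q : ℝ,
      |(n : ℝ)⁻¹ * ∑ i ∈ Finset.range n,
        δ i ω * ψ (X i ω) * ((if Y i ω ≤ q then (1 : ℝ) else 0) - H q (X i ω))| ≤ ε := by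
  have hX0 : Measurable (X 0) := (hmeas 0).fst
  have hY0 : Measurable (Y 0) := (hmeas 0).snd.fst
  have hδ0 : Measurable (δ 0) := (hmeas 0).snd.snd
  have hδabs : ∀ i ω, |δ i ω| ≤ 1 := by
    intro i ω; rcases hδ01 i ω with h | h <;> rw [h] <;> norm_num
  have hδnn : ∀ i ω, 0 ≤ δ i ω := by
    intro i ω; rcases hδ01 i ω with h | h <;> rw [h] <;> norm_num
  have hδle1 : ∀ i ω, δ i ω ≤ 1 := by
    intro i ω; rcases hδ01 i ω with h | h <;> rw [h] <;> norm_num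
  have hHabs : ∀ (q : ℝ) x, |H q x| ≤ 1 := by
    intro q x
    rcases hH01 q x with ⟨h1, h2⟩
    rw [abs_le]; exact ⟨by linarith, h2⟩
  have hindabs : ∀ (q y : ℝ), |(if y ≤ q then (1:ℝ) else 0)| ≤ 1 := by
    intro q y; split <;> norm_num
  -- measurability of integrands
  have hGm : ∀ q : ℝ, Measurable (fun ω => δ 0 ω * ψ (X 0 ω) * H q (X 0 ω)) := fun q =>
    (hδ0.mul (hψmeas.comp hX0)).mul (hHmeas.comp (measurable_const.prodMk hX0))
  have hFm : ∀ q : ℝ, Measurable (fun ω => δ 0 ω * ψ (X 0 ω) *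
      (if Y 0 ω ≤ q then (1:ℝ) else 0)) := fun q =>
    (hδ0.mul (hψmeas.comp hX0)).mul
      (Measurable.ite (measurableSet_le hY0 measurable_const) measurable_const measurable_const)
  have hGbd : ∀ (q : ℝ) ω, |δ 0 ω * ψ (X 0 ω) * H q (X 0 ω)| ≤ Cψ := fun q ω =>
    uwep_bd3 (hδabs 0 ω) (hψbdd (X 0 ω)) (hHabs q (X 0 ω))
  have hFbd : ∀ (q : ℝ) ω, |δ 0 ω * ψ (X 0 ω) * (if Y 0 ω ≤ q then (1:ℝ) else 0)| ≤ Cψ :=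
    fun q ω => uwep_bd3 (hδabs 0 ω) (hψbdd (X 0 ω)) (hindabs q (Y 0 ω))
  have hAbd : ∀ ω, |δ 0 ω * ψ (X 0 ω)| ≤ Cψ := fun ω =>
    uwep_bd2 (hδabs 0 ω) (hψbdd (X 0 ω))
  -- the MAR identity
  have hΦeq : ∀ q : ℝ, ∫ ω, δ 0 ω * ψ (X 0 ω) * (if Y 0 ω ≤ q then (1:ℝ) else 0) ∂μ
      = ∫ ω, δ 0 ω * ψ (X 0 ω) * H q (X 0 ω) ∂μ := fun q =>
    uwep_mar (X 0) (Y 0) (δ 0) (hmeas 0) ψ hψmeas H q (hMAR q) (hver q)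
      (fun ω => hδabs 0 ω) Cψ hψbdd
  -- Φ is continuous
  have hΦc : Continuous (fun q : ℝ => ∫ ω, δ 0 ω * ψ (X 0 ω) * H q (X 0 ω) ∂μ) := by
    refine continuous_of_dominated (fun q => (hGm q).aestronglyMeasurable)
      (fun q => Filter.Eventually.of_forall (fun ω => ?_)) (integrable_const Cψ)
      (Filter.Eventually.of_forall (fun ω => continuous_const.mul (hcont (X 0 ω))))
    have := hGbd q ω
    rwa [← Real.norm_eq_abs] at this
  -- Φ tends to 0 at -∞
  have hΦbot : Tendsto (fun q : ℝ => ∫ ω, δ 0 ω * ψ (X 0 ω) * H q (X 0 ω) ∂μ) atBot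
      (nhds 0) := by
    have h1 : Tendsto (fun q : ℝ => ∫ ω, δ 0 ω * ψ (X 0 ω) *
        (if Y 0 ω ≤ q then (1:ℝ) else 0) ∂μ) atBot (nhds (∫ _ω, (0:ℝ) ∂μ)) := by
      refine tendsto_integral_filter_of_dominated_convergence (fun _ => Cψ)
        (Filter.Eventually.of_forall (fun q => (hFm q).aestronglyMeasurable))
        (Filter.Eventually.of_forall (fun q => Filter.Eventually.of_forall (fun ω => ?_)))
        (integrable_const Cψ)
        (Filter.Eventually.of_forall (fun ω => ?_))
      · have := hFbd q ω
        rwa [← Real.norm_eq_abs] at this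
      · have hev : (fun q : ℝ => δ 0 ω * ψ (X 0 ω) * (if Y 0 ω ≤ q then (1:ℝ) else 0))
            =ᶠ[atBot] (fun _ => (0:ℝ)) := by
          filter_upwards [eventually_lt_atBot (Y 0 ω)] with q hq
          rw [if_neg (not_le.mpr hq), mul_zero]
        exact Tendsto.congr' hev.symm tendsto_const_nhds
    rw [integral_zero] at h1
    exact h1.congr hΦeq
  -- Φ tends to M at +∞
  have hΦtop : Tendsto (fun q : ℝ => ∫ ω, δ 0 ω * ψ (X 0 ω) * H q (X 0 ω) ∂μ) atTop
      (nhds (∫ ω, δ 0 ω * ψ (X 0 ω) ∂μ)) := by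
    have h1 : Tendsto (fun q : ℝ => ∫ ω, δ 0 ω * ψ (X 0 ω) *
        (if Y 0 ω ≤ q then (1:ℝ) else 0) ∂μ) atTop (nhds (∫ ω, δ 0 ω * ψ (X 0 ω) ∂μ)) := by
      refine tendsto_integral_filter_of_dominated_convergence (fun _ => Cψ)
        (Filter.Eventually.of_forall (fun q => (hFm q).aestronglyMeasurable))
        (Filter.Eventually.of_forall (fun q => Filter.Eventually.of_forall (fun ω => ?_)))
        (integrable_const Cψ)
        (Filter.Eventually.of_forall (fun ω => ?_))
      · have := hFbd q ω
        rwa [← Real.norm_eq_abs] at this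
      · have hev : (fun q : ℝ => δ 0 ω * ψ (X 0 ω) * (if Y 0 ω ≤ q then (1:ℝ) else 0))
            =ᶠ[atTop] (fun _ => δ 0 ω * ψ (X 0 ω)) := by
          filter_upwards [eventually_ge_atTop (Y 0 ω)] with q hq
          rw [if_pos hq, mul_one]
        exact Tendsto.congr' hev.symm tendsto_const_nhds
    exact h1.congr hΦeq
  -- strong laws
  have haeF : ∀ᵐ ω ∂μ, ∀ r : ℚ, Tendsto (fun n : ℕ => (∑ i ∈ Finset.range n,
      δ i ω * ψ (X i ω) * (if Y i ω ≤ (r:ℝ) then (1:ℝ) else 0)) / n) atTop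
      (nhds (∫ ω', δ 0 ω' * ψ (X 0 ω') * H (r:ℝ) (X 0 ω') ∂μ)) := by
    rw [ae_all_iff]
    intro r
    have h1 : ∀ᵐ ω ∂μ, Tendsto (fun n : ℕ => (∑ i ∈ Finset.range n,
        δ i ω * ψ (X i ω) * (if Y i ω ≤ (r:ℝ) then (1:ℝ) else 0)) / n) atTop
        (nhds (∫ ω', δ 0 ω' * ψ (X 0 ω') * (if Y 0 ω' ≤ (r:ℝ) then (1:ℝ) else 0) ∂μ)) :=
      uwep_slln X Y δ hmeas hindep hident
        (fun p => p.2.2 * ψ p.1 * (if p.2.1 ≤ (r:ℝ) then (1:ℝ) else 0))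
        ((measurable_snd.snd.mul (hψmeas.comp measurable_fst)).mul
          (Measurable.ite (measurableSet_le measurable_snd.fst measurable_const)
            measurable_const measurable_const))
        Cψ (fun ω => hFbd r ω)
    rw [hΦeq (r:ℝ)] at h1
    exact h1
  have haeG : ∀ᵐ ω ∂μ, ∀ r : ℚ, Tendsto (fun n : ℕ => (∑ i ∈ Finset.range n,
      δ i ω * ψ (X i ω) * H (r:ℝ) (X i ω)) / n) atTop
      (nhds (∫ ω', δ 0 ω' * ψ (X 0 ω') * H (r:ℝ) (X 0 ω') ∂μ)) := by
    rw [ae_all_iff]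
    intro r
    exact uwep_slln X Y δ hmeas hindep hident
      (fun p => p.2.2 * ψ p.1 * H (r:ℝ) p.1)
      ((measurable_snd.snd.mul (hψmeas.comp measurable_fst)).mul
        (hHmeas.comp (measurable_const.prodMk measurable_fst)))
      Cψ (fun ω => hGbd r ω)
  have haeA : ∀ᵐ ω ∂μ, Tendsto (fun n : ℕ => (∑ i ∈ Finset.range n,
      δ i ω * ψ (X i ω)) / n) atTop (nhds (∫ ω', δ 0 ω' * ψ (X 0 ω') ∂μ)) :=
    uwep_slln X Y δ hmeas hindep hident (fun p => p.2.2 * ψ p.1)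
      (measurable_snd.snd.mul (hψmeas.comp measurable_fst)) Cψ (fun ω => hAbd ω)
  -- conclude
  filter_upwards [haeF, haeG, haeA] with ω h1 h2 h3
  intro ε hε
  have hsplit : ∀ (n : ℕ) (q : ℝ), (n : ℝ)⁻¹ * ∑ i ∈ Finset.range n,
      δ i ω * ψ (X i ω) * ((if Y i ω ≤ q then (1 : ℝ) else 0) - H q (X i ω))
      = (∑ i ∈ Finset.range n, δ i ω * ψ (X i ω) * (if Y i ω ≤ q then (1:ℝ) else 0)) / n
        - (∑ i ∈ Finset.range n, δ i ω * ψ (X i ω) * H q (X i ω)) / n := by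
    intro n q
    rw [inv_mul_eq_div, div_sub_div_same]
    congr 1
    rw [← Finset.sum_sub_distrib]
    exact Finset.sum_congr rfl (fun i _ => mul_sub _ _ _)
  have hwnn : ∀ i, 0 ≤ δ i ω * ψ (X i ω) := fun i =>
    mul_nonneg (hδnn i ω) (hψ0 (X i ω))
  have hindmono : ∀ (y q q' : ℝ), q ≤ q' →
      (if y ≤ q then (1:ℝ) else 0) ≤ (if y ≤ q' then (1:ℝ) else 0) := by
    intro y q q' hqq'
    by_cases h : y ≤ q
    · rw [if_pos h, if_pos (h.trans hqq')]
    · rw [if_neg h]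
      split <;> norm_num
  have hind01 : ∀ (y q : ℝ), 0 ≤ (if y ≤ q then (1:ℝ) else 0) ∧
      (if y ≤ q then (1:ℝ) else 0) ≤ 1 := by
    intro y q; constructor <;> · split <;> norm_num
  have hdet := uwep_det (fun q : ℝ => ∫ ω', δ 0 ω' * ψ (X 0 ω') * H q (X 0 ω') ∂μ)
    (∫ ω', δ 0 ω' * ψ (X 0 ω') ∂μ)
    (fun n q => (∑ i ∈ Finset.range n, δ i ω * ψ (X i ω) *
      (if Y i ω ≤ q then (1:ℝ) else 0)) / n)
    (fun n q => (∑ i ∈ Finset.range n, δ i ω * ψ (X i ω) * H q (X i ω)) / n)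
    (fun n => (∑ i ∈ Finset.range n, δ i ω * ψ (X i ω)) / n)
    hΦc hΦbot hΦtop
    (fun n q q' hqq' => uwep_div_mono (Finset.sum_le_sum (fun i _ =>
      mul_le_mul_of_nonneg_left (hindmono (Y i ω) q q' hqq') (hwnn i))) (Nat.cast_nonneg n))
    (fun n q q' hqq' => uwep_div_mono (Finset.sum_le_sum (fun i _ =>
      mul_le_mul_of_nonneg_left (hmono (X i ω) hqq') (hwnn i))) (Nat.cast_nonneg n))
    (fun n q => div_nonneg (Finset.sum_nonneg (fun i _ =>
      mul_nonneg (hwnn i) (hind01 (Y i ω) q).1)) (Nat.cast_nonneg n))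
    (fun n q => div_nonneg (Finset.sum_nonneg (fun i _ =>
      mul_nonneg (hwnn i) (hH01 q (X i ω)).1)) (Nat.cast_nonneg n))
    (fun n q => uwep_div_mono (Finset.sum_le_sum (fun i _ =>
      mul_le_of_le_one_right (hwnn i) (hind01 (Y i ω) q).2)) (Nat.cast_nonneg n))
    (fun n q => uwep_div_mono (Finset.sum_le_sum (fun i _ =>
      mul_le_of_le_one_right (hwnn i) (hH01 q (X i ω)).2)) (Nat.cast_nonneg n))
    (fun r => h1 r) (fun r => h2 r) h3 ε hε
  filter_upwards [hdet] with n hn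
  intro q
  rw [hsplit n q]
  exact hn q

/-- Uniform a.s. convergence of the weighted centered empirical process: for i.i.d. copies
`(X_i, Y_i, δ_i)` of `(X₀, Y₀, δ₀)` satisfying missing at random, a bounded measurable
weight `ψ`, and `H(q,X)` a version of `E[1{Y ≤ q} | σ(X)]` which is nondecreasing and
continuous in `q`, one has
`sup_q |n⁻¹ Σ_{i<n} δ_i ψ(X_i)(1{Y_i ≤ q} − H(q,X_i))| → 0` almost surely. -/
theorem uniform_weighted_empirical_process
    {Ω : Type*} [MeasurableSpace Ω] (μ : Measure Ω) [IsProbabilityMeasure μ]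
    {S : Type*} [MeasurableSpace S]
    (X : ℕ → Ω → S) (Y : ℕ → Ω → ℝ) (δ : ℕ → Ω → ℝ)
    (hmeas : ∀ i, Measurable (fun ω => (X i ω, Y i ω, δ i ω)))
    (hindep : ProbabilityTheory.iIndepFun
      (fun i ω => (X i ω, Y i ω, δ i ω)) μ)
    (hident : ∀ i, ProbabilityTheory.IdentDistrib
      (fun ω => (X i ω, Y i ω, δ i ω)) (fun ω => (X 0 ω, Y 0 ω, δ 0 ω)) μ μ)
    (hδ01 : ∀ i ω, δ i ω = 0 ∨ δ i ω = 1)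
    (hMAR : ∀ q : ℝ,
      μ[fun ω => if Y 0 ω ≤ q then (1 : ℝ) else 0 |
          MeasurableSpace.comap (fun ω => (X 0 ω, δ 0 ω)) inferInstance]
        =ᵐ[μ] μ[fun ω => if Y 0 ω ≤ q then (1 : ℝ) else 0 |
          MeasurableSpace.comap (X 0) inferInstance])
    (ψ : S → ℝ) (hψmeas : Measurable ψ) (Cψ : ℝ) (hψbdd : ∀ x, |ψ x| ≤ Cψ)
    (H : ℝ → S → ℝ) (hHmeas : Measurable (Function.uncurry H))
    (hH01 : ∀ q x, H q x ∈ Set.Icc (0 : ℝ) 1)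
    (hver : ∀ q : ℝ,
      μ[fun ω => if Y 0 ω ≤ q then (1 : ℝ) else 0 | MeasurableSpace.comap (X 0) inferInstance]
        =ᵐ[μ] fun ω => H q (X 0 ω))
    (hmono : ∀ x, Monotone (fun q => H q x))
    (hcont : ∀ x, Continuous (fun q => H q x)) :
    ∀ᵐ ω ∂μ, Tendsto
      (fun n : ℕ => ⨆ q : ℝ,
        |(n : ℝ)⁻¹ * ∑ i ∈ Finset.range n,
          δ i ω * ψ (X i ω) * ((if Y i ω ≤ q then (1 : ℝ) else 0) - H q (X i ω))|)
      atTop (nhds 0) := by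
  have hΩ : Nonempty Ω := by
    by_contra h
    rw [not_nonempty_iff] at h
    have h1 : μ Set.univ = 0 := by
      rw [Set.univ_eq_empty_iff.mpr h]
      exact measure_empty
    rw [measure_univ] at h1
    exact one_ne_zero h1
  obtain ⟨ω₀⟩ := hΩ
  have hC0 : 0 ≤ Cψ := (abs_nonneg _).trans (hψbdd (X 0 ω₀))
  have hψpb : ∀ x, |max (ψ x) 0| ≤ Cψ := fun x => by
    rw [abs_of_nonneg (le_max_right _ _)]
    exact max_le ((le_abs_self _).trans (hψbdd x)) hC0
  have hψmb : ∀ x, |max (-ψ x) 0| ≤ Cψ := fun x => by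
    rw [abs_of_nonneg (le_max_right _ _)]
    exact max_le ((neg_le_abs _).trans (hψbdd x)) hC0
  have hp := uwep_nonneg μ X Y δ hmeas hindep hident hδ01 hMAR
    (fun x => max (ψ x) 0) (hψmeas.max measurable_const) Cψ hψpb
    (fun x => le_max_right _ _) H hHmeas hH01 hver hmono hcont
  have hm := uwep_nonneg μ X Y δ hmeas hindep hident hδ01 hMAR
    (fun x => max (-ψ x) 0) (hψmeas.neg.max measurable_const) Cψ hψmb
    (fun x => le_max_right _ _) H hHmeas hH01 hver hmono hcont
  filter_upwards [hp, hm] with ω hpω hmω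
  rw [Metric.tendsto_atTop]
  intro ε hε
  have hε4 : 0 < ε / 4 := by linarith
  obtain ⟨N1, hN1⟩ := eventually_atTop.mp (hpω (ε/4) hε4)
  obtain ⟨N2, hN2⟩ := eventually_atTop.mp (hmω (ε/4) hε4)
  refine ⟨max N1 N2, fun n hn => ?_⟩
  have h1 := hN1 n ((le_max_left _ _).trans hn)
  have h2 := hN2 n ((le_max_right _ _).trans hn)
  have hq : ∀ q : ℝ, |(n : ℝ)⁻¹ * ∑ i ∈ Finset.range n,
      δ i ω * ψ (X i ω) * ((if Y i ω ≤ q then (1 : ℝ) else 0) - H q (X i ω))| ≤ ε / 2 := by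
    intro q
    have hsum : (n : ℝ)⁻¹ * ∑ i ∈ Finset.range n,
        δ i ω * ψ (X i ω) * ((if Y i ω ≤ q then (1 : ℝ) else 0) - H q (X i ω))
        = (n : ℝ)⁻¹ * ∑ i ∈ Finset.range n,
            δ i ω * max (ψ (X i ω)) 0 * ((if Y i ω ≤ q then (1 : ℝ) else 0) - H q (X i ω))
          - (n : ℝ)⁻¹ * ∑ i ∈ Finset.range n,
            δ i ω * max (-ψ (X i ω)) 0 * ((if Y i ω ≤ q then (1 : ℝ) else 0) - H q (X i ω)) := by
      rw [← mul_sub, ← Finset.sum_sub_distrib]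
      congr 1
      refine Finset.sum_congr rfl (fun i _ => ?_)
      have hmx := max_zero_sub_max_neg_zero_eq_self (ψ (X i ω))
      have hrw : δ i ω * ψ (X i ω) * ((if Y i ω ≤ q then (1:ℝ) else 0) - H q (X i ω))
          = δ i ω * (max (ψ (X i ω)) 0 - max (-ψ (X i ω)) 0) *
            ((if Y i ω ≤ q then (1:ℝ) else 0) - H q (X i ω)) := by rw [hmx]
      rw [hrw]
      ring
    rw [hsum]
    calc |(n : ℝ)⁻¹ * ∑ i ∈ Finset.range n,
            δ i ω * max (ψ (X i ω)) 0 * ((if Y i ω ≤ q then (1 : ℝ) else 0) - H q (X i ω))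
          - (n : ℝ)⁻¹ * ∑ i ∈ Finset.range n,
            δ i ω * max (-ψ (X i ω)) 0 * ((if Y i ω ≤ q then (1 : ℝ) else 0) - H q (X i ω))|
        ≤ |(n : ℝ)⁻¹ * ∑ i ∈ Finset.range n,
            δ i ω * max (ψ (X i ω)) 0 * ((if Y i ω ≤ q then (1 : ℝ) else 0) - H q (X i ω))|
          + |(n : ℝ)⁻¹ * ∑ i ∈ Finset.range n,
            δ i ω * max (-ψ (X i ω)) 0 * ((if Y i ω ≤ q then (1 : ℝ) else 0) - H q (X i ω))| :=
      abs_sub _ _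
    _ ≤ ε/4 + ε/4 := add_le_add (h1 q) (h2 q)
    _ = ε/2 := by ring
  have hbdd : BddAbove (Set.range (fun q : ℝ => |(n : ℝ)⁻¹ * ∑ i ∈ Finset.range n,
      δ i ω * ψ (X i ω) * ((if Y i ω ≤ q then (1 : ℝ) else 0) - H q (X i ω))|)) := by
    refine ⟨ε/2, ?_⟩
    rintro _ ⟨q, rfl⟩
    exact hq q
  have hsup_le : (⨆ q : ℝ, |(n : ℝ)⁻¹ * ∑ i ∈ Finset.range n,
      δ i ω * ψ (X i ω) * ((if Y i ω ≤ q then (1 : ℝ) else 0) - H q (X i ω))|) ≤ ε / 2 :=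
    ciSup_le hq
  have hsup_nn : 0 ≤ ⨆ q : ℝ, |(n : ℝ)⁻¹ * ∑ i ∈ Finset.range n,
      δ i ω * ψ (X i ω) * ((if Y i ω ≤ q then (1 : ℝ) else 0) - H q (X i ω))| :=
    (abs_nonneg _).trans (le_ciSup hbdd 0)
  rw [Real.dist_eq, sub_zero, abs_of_nonneg hsup_nn]
  linarith
end

section
/- Let n ∈ ℕ, let S ⊆ {1,…,n} be nonempty, let d_i > 0 for i ∈ S, let Δ > 0, and let Â₁,…,Â_n ∈ ℝ^{p+1} be vectors whose (p+1)-th coordinate equals 1. Consider the primal problem: minimize Σ_{i∈S} d_i w_i² over w = (w_i)_{i∈S} subject to | (n^{-1}Σ_{j=1}^n Â_j − Σ_{i∈S} w_i Â_i)_k | ≤ Δ for each k = 1,…,p and Σ_{i∈S} w_i = 1; assume its feasible set is nonempty. If η̂ ∈ ℝ^{p+1} minimizes G(η) = (4n)^{-1} Σ_{i∈S} (Â_iᵀη)²/d_i − n^{-1} Σ_{j=1}^n Â_jᵀη + Δ‖η_{−(p+1)}‖₁ over ℝ^{p+1} (where η_{−(p+1)} denotes the first p coordinates of η), then the vector ŵ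 defined by ŵ_i = (2n)^{-1} Â_iᵀη̂ / d_i for i ∈ S is feasible for the primal problem and minimizes it. -/
lemma aux1' (c q : ℝ) (hq : 0 ≤ q)
    (h : ∀ t : ℝ, |t| < 1 → 0 ≤ -(t*c) + t^2*q) : c = 0 := by
  by_contra hc
  have hcpos : 0 < |c| := abs_pos.mpr hc
  set ε : ℝ := min (1/(2*(|c|+1))) (1/(2*(q+1))) with hε
  have hε1 : 0 < ε := lt_min (by positivity) (by positivity)
  have hεc : ε * |c| < 1 := by
    have h1 : ε ≤ 1/(2*(|c|+1)) := min_le_left _ _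
    have : ε * |c| ≤ (1/(2*(|c|+1))) * |c| := by nlinarith
    have h2 : (1/(2*(|c|+1))) * |c| < 1 := by
      rw [div_mul_eq_mul_div, div_lt_one (by positivity)]; nlinarith
    linarith
  have hεq : ε * q ≤ 1/2 := by
    have h1 : ε ≤ 1/(2*(q+1)) := min_le_right _ _
    have : ε * q ≤ (1/(2*(q+1))) * q := by nlinarith
    have h2 : (1/(2*(q+1))) * q ≤ 1/2 := by
      rw [div_mul_eq_mul_div, div_le_iff₀ (by positivity)]; nlinarith
    linarith
  have ht : |c * ε| < 1 := by
    rw [abs_mul, abs_of_pos hε1, mul_comm]; exact hεc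
  have h2 := h (c * ε) ht
  have hc2 : 0 < c^2 := by positivity
  nlinarith [mul_pos hε1 hc2]

lemma aux2' (c q D : ℝ) (hq : 0 ≤ q) (hD : 0 < D)
    (h : ∀ t : ℝ, 0 ≤ -(t*c) + t^2*q + D*|t|) : |c| ≤ D := by
  rcases eq_or_ne c 0 with h0 | h0
  · simp [h0]; linarith
  have hc2 : 0 < c^2 := by positivity
  have key : c^2 ≤ D*|c| := by
    refine le_of_forall_pos_le_add ?_
    intro ε hε
    have hden : (0:ℝ) < c^2*q + c^2 := by positivity
    set s : ℝ := ε/(c^2*q + c^2) with hs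
    have hspos : 0 < s := div_pos hε hden
    have h2 := h (s * c)
    have habs : |s * c| = s * |c| := by rw [abs_mul, abs_of_pos hspos]
    rw [habs] at h2
    have h3 : s * c^2 ≤ s * (s*(c^2*q) + D*|c|) := by nlinarith
    have h4 : c^2 ≤ s*(c^2*q) + D*|c| := le_of_mul_le_mul_left (by linarith [h3]) hspos
    have h5 : s * (c^2*q + c^2) = ε := div_mul_cancel₀ _ hden.ne'
    have h6 : s*(c^2*q) ≤ ε := by nlinarith [mul_pos hspos hc2]
    linarith
  have h7 : |c| * |c| ≤ D * |c| := by rwa [← sq_abs, sq] at key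
  exact le_of_mul_le_mul_right h7 (abs_pos.mpr h0)

/-- Lagrangian dual representation of the debiasing weights: if `η̂` minimizes the dual
objective `G(η) = (4n)⁻¹ Σ_{i∈S} (Â_iᵀη)²/d_i − n⁻¹ Σ_j Â_jᵀη + Δ‖η_{−(p+1)}‖₁`, then
`ŵ_i = (2n)⁻¹ Â_iᵀη̂ / d_i`, `i ∈ S`, is feasible for the primal problem (minimize
`Σ_{i∈S} d_i w_i²` subject to the `ℓ∞` constraint on the first `p` coordinates and
`Σ_{i∈S} w_i = 1`) and minimizes it. -/
theorem dual_representation_of_weights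
    (n p : ℕ) (S : Finset (Fin n)) (hS : S.Nonempty)
    (d : Fin n → ℝ) (hd : ∀ i ∈ S, 0 < d i)
    (Δ : ℝ) (hΔ : 0 < Δ)
    (A : Fin n → Fin (p + 1) → ℝ) (hlast : ∀ i, A i (Fin.last p) = 1)
    (Feasible : (Fin n → ℝ) → Prop)
    (hFeas : ∀ w, Feasible w ↔
      ((∀ k : Fin p,
          |(n : ℝ)⁻¹ * (∑ j, A j k.castSucc) - ∑ i ∈ S, w i * A i k.castSucc| ≤ Δ) ∧
        (∑ i ∈ S, w i) = 1))
    (hfeas_nonempty : ∃ w, Feasible w)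
    (G : (Fin (p + 1) → ℝ) → ℝ)
    (hG : ∀ η, G η = (4 * (n : ℝ))⁻¹ * (∑ i ∈ S, (∑ k, A i k * η k) ^ 2 / d i)
        - (n : ℝ)⁻¹ * (∑ j, ∑ k, A j k * η k)
        + Δ * (∑ k : Fin p, |η k.castSucc|))
    (eta : Fin (p + 1) → ℝ) (heta : ∀ η, G eta ≤ G η)
    (w_hat : Fin n → ℝ)
    (hw_hat : ∀ i ∈ S, w_hat i = (2 * (n : ℝ))⁻¹ * (∑ k, A i k * eta k) / d i) :
    Feasible w_hat ∧
      ∀ w, Feasible w → (∑ i ∈ S, d i * w_hat i ^ 2) ≤ ∑ i ∈ S, d i * w i ^ 2 := by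
  obtain ⟨i0, hi0⟩ := hS
  have hn : (0:ℝ) < n := by exact_mod_cast i0.pos
  have hn' : (n:ℝ) ≠ 0 := ne_of_gt hn
  set a : Fin n → ℝ := fun i => ∑ k, A i k * eta k with ha
  set c : Fin (p+1) → ℝ :=
    fun k₀ => (n:ℝ)⁻¹ * (∑ j, A j k₀) - ∑ i ∈ S, w_hat i * A i k₀ with hc
  set q : Fin (p+1) → ℝ := fun k₀ => (4*(n:ℝ))⁻¹ * (∑ i ∈ S, (A i k₀)^2 / d i) with hqdef
  have hq : ∀ k₀, 0 ≤ q k₀ := by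
    intro k₀
    apply mul_nonneg (by positivity)
    exact Finset.sum_nonneg fun i hi => div_nonneg (sq_nonneg _) (hd i hi).le
  have h1 : ∀ (k₀ : Fin (p+1)) (t : ℝ) (i : Fin n),
      (∑ k, A i k * (eta k + t * (if k = k₀ then 1 else 0))) = a i + t * A i k₀ := by
    intro k₀ t i
    simp only [mul_add, Finset.sum_add_distrib, mul_ite, mul_one, mul_zero]
    rw [Finset.sum_ite_eq' Finset.univ k₀ (fun k => A i k * t)]
    simp [ha, mul_comm]
  have hexp : ∀ (k₀ : Fin (p+1)) (t : ℝ),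
      G (fun k => eta k + t * (if k = k₀ then 1 else 0))
        = G eta - t * c k₀ + t^2 * q k₀
          + Δ * ((∑ k : Fin p, |eta k.castSucc + t * (if k.castSucc = k₀ then 1 else 0)|)
              - ∑ k : Fin p, |eta k.castSucc|) := by
    intro k₀ t
    rw [hG, hG]
    simp only [h1 k₀ t]
    have h2 : (∑ i ∈ S, (a i + t * A i k₀)^2 / d i)
        = (∑ i ∈ S, (a i)^2 / d i) + (2*t) * (∑ i ∈ S, a i * A i k₀ / d i)
          + t^2 * (∑ i ∈ S, (A i k₀)^2 / d i) := by
      simp only [Finset.mul_sum]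
      rw [← Finset.sum_add_distrib, ← Finset.sum_add_distrib]
      exact Finset.sum_congr rfl fun i hi => by ring
    have h3 : ∑ i ∈ S, w_hat i * A i k₀ = (2*(n:ℝ))⁻¹ * ∑ i ∈ S, a i * A i k₀ / d i := by
      rw [Finset.mul_sum]
      exact Finset.sum_congr rfl fun i hi => by rw [hw_hat i hi]; ring
    have h4 : (∑ j, (a j + t * A j k₀)) = (∑ j, a j) + t * (∑ j, A j k₀) := by
      rw [Finset.sum_add_distrib, Finset.mul_sum]
    rw [h2, h4, hc]
    simp only [h3, hqdef]
    field_simp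
    ring
  -- feasibility: last coordinate
  have hclast : c (Fin.last p) = 0 := by
    apply aux1' _ (q (Fin.last p)) (hq _)
    intro t ht
    have h5 := heta (fun k => eta k + t * (if k = Fin.last p then 1 else 0))
    rw [hexp] at h5
    have h6 : (∑ k : Fin p, |eta k.castSucc + t * (if k.castSucc = Fin.last p then 1 else 0)|)
        = ∑ k : Fin p, |eta k.castSucc| := by
      apply Finset.sum_congr rfl
      intro k _
      have : k.castSucc ≠ Fin.last p := (Fin.castSucc_lt_last k).ne
      simp [this]
    rw [h6] at h5
    nlinarith [h5]
  -- feasibility: box constraints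
  have habs : ∀ k : Fin p, |c k.castSucc| ≤ Δ := by
    intro k
    apply aux2' _ (q k.castSucc) _ (hq _) hΔ
    intro t
    have h5 := heta (fun k' => eta k' + t * (if k' = k.castSucc then 1 else 0))
    rw [hexp] at h5
    have h6 : (∑ k' : Fin p, |eta k'.castSucc + t * (if k'.castSucc = k.castSucc then 1 else 0)|)
        ≤ (∑ k' : Fin p, |eta k'.castSucc|) + |t| := by
      have h7 : ∀ k' : Fin p, |eta k'.castSucc + t * (if k'.castSucc = k.castSucc then 1 else 0)|
          ≤ |eta k'.castSucc| + |t * (if k' = k then 1 else 0)| := by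
        intro k'
        simp only [Fin.castSucc_inj]
        exact abs_add_le _ _
      calc (∑ k' : Fin p, |eta k'.castSucc + t * (if k'.castSucc = k.castSucc then 1 else 0)|)
          ≤ ∑ k' : Fin p, (|eta k'.castSucc| + |t * (if k' = k then 1 else 0)|) :=
            Finset.sum_le_sum fun k' _ => h7 k'
        _ = (∑ k' : Fin p, |eta k'.castSucc|) + |t| := by
            rw [Finset.sum_add_distrib]
            congr 1
            rw [show (∑ k' : Fin p, |t * (if k' = k then 1 else 0)|)
                = ∑ k' : Fin p, (if k' = k then |t| else 0) from
              Finset.sum_congr rfl fun k' _ => by split <;> simp]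
            simp
    nlinarith [h5, mul_le_mul_of_nonneg_left h6 hΔ.le]
  have hsum1 : (∑ i ∈ S, w_hat i) = 1 := by
    have h8 : c (Fin.last p) = 1 - ∑ i ∈ S, w_hat i := by
      rw [hc]
      simp only [hlast, mul_one]
      rw [Finset.sum_const, nsmul_eq_mul, Finset.card_univ, Fintype.card_fin]
      field_simp
    rw [h8] at hclast
    linarith
  have hfeasw : Feasible w_hat := (hFeas w_hat).mpr ⟨fun k => habs k, hsum1⟩
  refine ⟨hfeasw, ?_⟩
  -- optimality
  set X : ℝ := ∑ i ∈ S, (a i)^2 / d i with hX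
  set L : ℝ := ∑ j, a j with hL
  set P0 : ℝ := ∑ k : Fin p, |eta k.castSucc| with hP0
  have hXnn : 0 ≤ X := Finset.sum_nonneg fun i hi => div_nonneg (sq_nonneg _) (hd i hi).le
  have hscale : ∀ s : ℝ, G (fun k => s * eta k)
      = s^2 * ((4*(n:ℝ))⁻¹ * X) - s * ((n:ℝ)⁻¹ * L) + Δ * (|s| * P0) := by
    intro s
    rw [hG]
    have hh1 : ∀ i : Fin n, (∑ k, A i k * (s * eta k)) = s * a i := by
      intro i
      rw [ha, Finset.mul_sum]
      exact Finset.sum_congr rfl fun k _ => by ring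
    simp only [hh1]
    have hh2 : (∑ i ∈ S, (s * a i)^2 / d i) = s^2 * X := by
      rw [hX, Finset.mul_sum]
      exact Finset.sum_congr rfl fun i _ => by ring
    have hh3 : (∑ j, s * a j) = s * L := by rw [hL, Finset.mul_sum]
    have hh4 : (∑ k : Fin p, |s * eta k.castSucc|) = |s| * P0 := by
      rw [hP0, Finset.mul_sum]
      exact Finset.sum_congr rfl fun k _ => by rw [abs_mul]
    rw [hh2, hh3, hh4]
    ring
  have hkey : (n:ℝ)⁻¹ * L - Δ * P0 - 2 * ((4*(n:ℝ))⁻¹ * X) = 0 := by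
    apply aux1' _ ((4*(n:ℝ))⁻¹ * X) (by positivity)
    intro t ht
    have h5 := heta (fun k => (1+t) * eta k)
    rw [hscale] at h5
    have h6 : G eta = G (fun k => (1:ℝ) * eta k) := by
      congr 1; funext k; ring
    rw [h6, hscale] at h5
    have habs2 : |1+t| = 1+t := abs_of_pos (by cases abs_lt.mp ht; linarith)
    rw [abs_one, habs2] at h5
    nlinarith [h5]
  intro w hw
  obtain ⟨hwc, hws⟩ := (hFeas w).mp hw
  -- d i * w_hat i = (2n)⁻¹ * a i on S
  have hdw : ∀ i ∈ S, d i * w_hat i = (2*(n:ℝ))⁻¹ * a i := by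
    intro i hi
    rw [hw_hat i hi]
    simp only [ha]
    field_simp [(hd i hi).ne']
  -- sum of d ŵ² in terms of X
  have hsq : (∑ i ∈ S, d i * w_hat i ^ 2) = (2*(n:ℝ))⁻¹ * ((2*(n:ℝ))⁻¹ * X) := by
    rw [hX, Finset.mul_sum, Finset.mul_sum]
    apply Finset.sum_congr rfl
    intro i hi
    rw [hw_hat i hi]
    simp only [ha]
    field_simp [(hd i hi).ne']
  -- swap sums: ∑_{i∈S} a i * w i = ∑_k eta k * m k
  set m : Fin (p+1) → ℝ := fun k => ∑ i ∈ S, w i * A i k with hm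
  have hswap : (∑ i ∈ S, a i * w i) = ∑ k, eta k * m k := by
    rw [ha, hm]
    simp only [Finset.sum_mul, Finset.mul_sum]
    rw [Finset.sum_comm]
    exact Finset.sum_congr rfl fun k _ => Finset.sum_congr rfl fun i _ => by ring
  set u : Fin (p+1) → ℝ := fun k => (n:ℝ)⁻¹ * (∑ j, A j k) with hu
  have hLu : (n:ℝ)⁻¹ * L = ∑ k, eta k * u k := by
    have e1 : (n:ℝ)⁻¹ * L = ∑ j, ∑ k, (n:ℝ)⁻¹ * (A j k * eta k) := by
      rw [hL, Finset.mul_sum]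
      refine Finset.sum_congr rfl fun j _ => ?_
      simp only [ha]
      rw [Finset.mul_sum]
    have e2 : ∀ k, eta k * u k = ∑ j, (n:ℝ)⁻¹ * (A j k * eta k) := by
      intro k
      simp only [hu]
      rw [Finset.mul_sum, Finset.mul_sum]
      exact Finset.sum_congr rfl fun j _ => by ring
    rw [e1, Finset.sum_comm]
    exact Finset.sum_congr rfl fun k _ => (e2 k).symm
  -- coordinatewise bound
  have hcoord : (∑ k, eta k * (u k - m k)) ≤ Δ * P0 := by
    rw [Fin.sum_univ_castSucc]
    have hlast0 : eta (Fin.last p) * (u (Fin.last p) - m (Fin.last p)) = 0 := by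
      have hu1 : u (Fin.last p) = 1 := by
        rw [hu]
        simp only [hlast]
        rw [Finset.sum_const, nsmul_eq_mul, Finset.card_univ, Fintype.card_fin]
        field_simp
      have hm1 : m (Fin.last p) = 1 := by
        rw [hm]
        simp only [hlast, mul_one]
        exact hws
      rw [hu1, hm1]
      ring
    rw [hlast0, add_zero, hP0, Finset.mul_sum]
    apply Finset.sum_le_sum
    intro k _
    have h9 : |u k.castSucc - m k.castSucc| ≤ Δ := hwc k
    calc eta k.castSucc * (u k.castSucc - m k.castSucc)
        ≤ |eta k.castSucc * (u k.castSucc - m k.castSucc)| := le_abs_self _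
      _ = |eta k.castSucc| * |u k.castSucc - m k.castSucc| := abs_mul _ _
      _ ≤ |eta k.castSucc| * Δ := mul_le_mul_of_nonneg_left h9 (abs_nonneg _)
      _ = Δ * |eta k.castSucc| := mul_comm _ _
  -- combine: ∑_{i∈S} a i * w i ≥ (2n)⁻¹ X
  have hmain : (2*(n:ℝ))⁻¹ * X ≤ ∑ i ∈ S, a i * w i := by
    rw [hswap]
    have h10 : (∑ k, eta k * m k) = (∑ k, eta k * u k) - ∑ k, eta k * (u k - m k) := by
      rw [← Finset.sum_sub_distrib]
      exact Finset.sum_congr rfl fun k _ => by ring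
    rw [h10, ← hLu]
    have h11 : (n:ℝ)⁻¹ * L - Δ * P0 = (2*(n:ℝ))⁻¹ * X := by
      have h12 : 2 * ((4*(n:ℝ))⁻¹ * X) = (2*(n:ℝ))⁻¹ * X := by
        field_simp
        ring
      linarith [hkey]
    linarith [hcoord]
  -- convexity argument
  have hid : (∑ i ∈ S, d i * (w i - w_hat i)^2)
      = (∑ i ∈ S, d i * w i ^ 2) - 2 * (∑ i ∈ S, d i * w_hat i * w i)
        + (∑ i ∈ S, d i * w_hat i ^ 2) := by
    rw [Finset.mul_sum, ← Finset.sum_sub_distrib, ← Finset.sum_add_distrib]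
    exact Finset.sum_congr rfl fun i _ => by ring
  have hnn : 0 ≤ ∑ i ∈ S, d i * (w i - w_hat i)^2 :=
    Finset.sum_nonneg fun i hi => mul_nonneg (hd i hi).le (sq_nonneg _)
  have hcross : (∑ i ∈ S, d i * w_hat i * w i) = (2*(n:ℝ))⁻¹ * ∑ i ∈ S, a i * w i := by
    rw [Finset.mul_sum]
    exact Finset.sum_congr rfl fun i hi => by rw [hdw i hi]; ring
  have h2n : (0:ℝ) ≤ (2*(n:ℝ))⁻¹ := by positivity
  have hfin := mul_le_mul_of_nonneg_left hmain h2n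
  linarith [hid, hnn, hsq, hcross, hfin]
end

section
/- Let S be a nonempty finite index set, d_i > 0 for i ∈ S, b ∈ ℝ^p, M ∈ ℝ^{p×S}, and Δ > 0. Define f(w) = Σ_{i∈S} d_i w_i² and g(w) = ‖b − Mw‖_∞ for w ∈ ℝ^S. Assume the Slater condition: there exists w₀ ∈ ℝ^S with Σ_{i∈S} (w₀)_i = 1 and g(w₀) < Δ. If ŵ minimizes f over the set { w : g(w) ≤ Δ, Σ_{i∈S} w_i = 1 }, then there exists ζ ∈ [0,1) such that ŵ minimizes (1−ζ)·f(w) + ζ·g(w)² over the set { w : Σ_{i∈S} w_i = 1 }. -/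
open Matrix

/-- Equivalence of the constrained and penalized programs (Lagrangian duality with Slater's
condition): if `ŵ` minimizes `f(w) = Σ_i d_i w_i²` over `{w : ‖b − Mw‖_∞ ≤ Δ, Σ_i w_i = 1}`,
and some `w₀` with `Σ_i (w₀)_i = 1` satisfies `‖b − Mw₀‖_∞ < Δ`, then there exists
`ζ ∈ [0,1)` such that `ŵ` minimizes `(1−ζ) f(w) + ζ ‖b − Mw‖_∞²` over `{w : Σ_i w_i = 1}`. -/
theorem constrained_penalized_equivalence
    {ι : Type*} [Fintype ι] [Nonempty ι]
    (d : ι → ℝ) (hd : ∀ i, 0 < d i)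
    (p : ℕ) (b : Fin p → ℝ) (M : Matrix (Fin p) ι ℝ)
    (Δ : ℝ) (hΔ : 0 < Δ)
    (f g : (ι → ℝ) → ℝ)
    (hf : ∀ w, f w = ∑ i, d i * w i ^ 2)
    (hg : ∀ w, g w = ⨆ k : Fin p, |(b - M *ᵥ w) k|)
    (hSlater : ∃ w₀ : ι → ℝ, (∑ i, w₀ i) = 1 ∧ g w₀ < Δ)
    (w_hat : ι → ℝ)
    (hw_feas : g w_hat ≤ Δ ∧ (∑ i, w_hat i) = 1)
    (hw_min : ∀ w : ι → ℝ, g w ≤ Δ → (∑ i, w i) = 1 → f w_hat ≤ f w) :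
    ∃ ζ : ℝ, ζ ∈ Set.Ico (0 : ℝ) 1 ∧
      ∀ w : ι → ℝ, (∑ i, w i) = 1 →
        (1 - ζ) * f w_hat + ζ * g w_hat ^ 2 ≤ (1 - ζ) * f w + ζ * g w ^ 2 := by
  obtain ⟨w₀, hw₀sum, hw₀g⟩ := hSlater
  -- g is nonnegative
  have hg0 : ∀ w, 0 ≤ g w := fun w => by
    rw [hg]; exact Real.iSup_nonneg fun k => abs_nonneg _
  -- convexity of g
  have hgconv : ∀ (t : ℝ) (w₁ w₂ : ι → ℝ), 0 ≤ t → t ≤ 1 →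
      g (fun i => t * w₁ i + (1 - t) * w₂ i) ≤ t * g w₁ + (1 - t) * g w₂ := by
    intro t w₁ w₂ ht ht1
    rw [hg]
    apply Real.iSup_le _
      (add_nonneg (mul_nonneg ht (hg0 w₁)) (mul_nonneg (by linarith) (hg0 w₂)))
    intro k
    have e1 : ∀ (c : ℝ) (v : ι → ℝ), (∑ x, M k x * (c * v x)) = c * ∑ x, M k x * v x := by
      intro c v
      rw [Finset.mul_sum]
      exact Finset.sum_congr rfl fun i _ => by ring
    have hk : (b - M *ᵥ fun i => t * w₁ i + (1 - t) * w₂ i) k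
        = t * (b - M *ᵥ w₁) k + (1 - t) * (b - M *ᵥ w₂) k := by
      simp only [Pi.sub_apply, mulVec, dotProduct, mul_add, Finset.sum_add_distrib]
      rw [e1, e1]
      ring
    have h1 : |(b - M *ᵥ w₁) k| ≤ g w₁ := by
      rw [hg]
      exact le_ciSup (f := fun k => |(b - M *ᵥ w₁) k|)
        (Set.Finite.bddAbove (Set.finite_range _)) k
    have h2 : |(b - M *ᵥ w₂) k| ≤ g w₂ := by
      rw [hg]
      exact le_ciSup (f := fun k => |(b - M *ᵥ w₂) k|)
        (Set.Finite.bddAbove (Set.finite_range _)) k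
    have habs : |(b - M *ᵥ fun i => t * w₁ i + (1 - t) * w₂ i) k|
        ≤ t * |(b - M *ᵥ w₁) k| + (1 - t) * |(b - M *ᵥ w₂) k| := by
      rw [hk]
      refine (abs_add_le _ _).trans ?_
      rw [abs_mul, abs_mul, abs_of_nonneg ht,
        abs_of_nonneg (show (0:ℝ) ≤ 1 - t by linarith)]
    refine habs.trans ?_
    gcongr <;> linarith
  -- convexity of f
  have hfconv : ∀ (t : ℝ) (w₁ w₂ : ι → ℝ), 0 ≤ t → t ≤ 1 →
      f (fun i => t * w₁ i + (1 - t) * w₂ i) ≤ t * f w₁ + (1 - t) * f w₂ := by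
    intro t w₁ w₂ ht ht1
    rw [hf, hf, hf, Finset.mul_sum, Finset.mul_sum, ← Finset.sum_add_distrib]
    apply Finset.sum_le_sum
    intro i _
    have hdi := (hd i).le
    nlinarith [sq_nonneg (w₁ i - w₂ i), mul_nonneg ht (by linarith : (0:ℝ) ≤ 1 - t),
      mul_nonneg (mul_nonneg ht (by linarith : (0:ℝ) ≤ 1 - t)) (sq_nonneg (w₁ i - w₂ i))]
  -- notation
  set F : (ι → ℝ) → ℝ := fun w => f w - f w_hat with hF
  set G : (ι → ℝ) → ℝ := fun w => g w ^ 2 - Δ ^ 2 with hG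
  -- sq of g comparison: G w ≤ 0 ↔ g w ≤ Δ (given g ≥ 0, Δ > 0)
  have hGle : ∀ w, G w ≤ 0 → g w ≤ Δ := by
    intro w h
    simp only [hG] at h
    nlinarith [hg0 w]
  have hGle' : ∀ w, g w ≤ Δ → G w ≤ 0 := by
    intro w h
    simp only [hG]
    nlinarith [hg0 w]
  -- pairing inequality
  have pairing : ∀ w₁ w₂ : ι → ℝ, (∑ i, w₁ i) = 1 → (∑ i, w₂ i) = 1 →
      G w₁ < 0 → 0 < G w₂ → 0 ≤ G w₂ * F w₁ + (-G w₁) * F w₂ := by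
    intro w₁ w₂ hs₁ hs₂ hG₁ hG₂
    obtain ⟨t, htdef⟩ : ∃ t : ℝ, t = G w₂ / (G w₂ - G w₁) := ⟨_, rfl⟩
    have hden : 0 < G w₂ - G w₁ := by linarith
    have ht0 : 0 < t := by
      rw [htdef]; exact div_pos hG₂ hden
    have ht1 : t < 1 := by
      rw [htdef, div_lt_one hden]; linarith
    set wt : ι → ℝ := fun i => t * w₁ i + (1 - t) * w₂ i with hwt
    have hsum : (∑ i, wt i) = 1 := by
      simp only [hwt, Finset.sum_add_distrib, ← Finset.mul_sum, hs₁, hs₂]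
      ring
    have ht' : t * (G w₂ - G w₁) = G w₂ := by
      rw [htdef]; exact div_mul_cancel₀ (G w₂) hden.ne'
    have ht'' : (1 - t) * (G w₂ - G w₁) = -G w₁ := by linear_combination -ht'
    have hgwt : g wt ≤ t * g w₁ + (1 - t) * g w₂ := hgconv t w₁ w₂ ht0.le ht1.le
    have hGt : G wt ≤ t * G w₁ + (1 - t) * G w₂ := by
      simp only [hG]
      have h1 : g wt ^ 2 ≤ (t * g w₁ + (1 - t) * g w₂) ^ 2 := by
        apply pow_le_pow_left₀ (hg0 wt) hgwt
      have h2 : (t * g w₁ + (1 - t) * g w₂) ^ 2 ≤ t * g w₁ ^ 2 + (1 - t) * g w₂ ^ 2 := by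
        nlinarith [sq_nonneg (g w₁ - g w₂), mul_nonneg ht0.le (by linarith : (0:ℝ) ≤ 1 - t),
          mul_nonneg (mul_nonneg ht0.le (by linarith : (0:ℝ) ≤ 1 - t)) (sq_nonneg (g w₁ - g w₂))]
      nlinarith
    have hcomb : t * G w₁ + (1 - t) * G w₂ = 0 := by linear_combination -ht'
    have hGwt : G wt ≤ 0 := by linarith
    have hFwt : 0 ≤ F wt := by
      simp only [hF, sub_nonneg]
      exact hw_min wt (hGle wt hGwt) hsum
    have hfwt : f wt ≤ t * f w₁ + (1 - t) * f w₂ := hfconv t w₁ w₂ ht0.le ht1.le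
    have key : 0 ≤ t * F w₁ + (1 - t) * F w₂ := by
      simp only [hF] at hFwt ⊢
      nlinarith
    have expand : G w₂ * F w₁ + (-G w₁) * F w₂
        = (t * F w₁ + (1 - t) * F w₂) * (G w₂ - G w₁) := by
      linear_combination (-F w₁) * ht' + (-F w₂) * ht''
    rw [expand]
    exact mul_nonneg key hden.le
  -- Slater point facts
  have hGw₀ : G w₀ < 0 := by
    simp only [hG]
    nlinarith [hg0 w₀]
  have hFw₀ : 0 ≤ F w₀ := by
    simp only [hF, sub_nonneg]
    exact hw_min w₀ hw₀g.le hw₀sum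
  -- the multiplier
  set S : Set ℝ := insert 0 { r | ∃ w : ι → ℝ, (∑ i, w i) = 1 ∧ 0 < G w ∧ r = -F w / G w }
    with hSdef
  have hSne : S.Nonempty := ⟨0, Set.mem_insert _ _⟩
  have hub : ∀ r ∈ S, r ≤ F w₀ / (-G w₀) := by
    intro r hr
    rcases hr with rfl | ⟨w, hs, hGw, rfl⟩
    · exact div_nonneg hFw₀ (by linarith)
    · rw [div_le_div_iff₀ hGw (by linarith)]
      have := pairing w₀ w hw₀sum hs hGw₀ hGw
      nlinarith
  have hbdd : BddAbove S := ⟨F w₀ / (-G w₀), hub⟩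
  obtain ⟨lam, hlam⟩ : ∃ l : ℝ, l = sSup S := ⟨_, rfl⟩
  have hlam0 : 0 ≤ lam := hlam ▸ le_csSup hbdd (Set.mem_insert _ _)
  -- key inequality: ∀ w on the hyperplane, 0 ≤ F w + lam * G w
  have hkey : ∀ w : ι → ℝ, (∑ i, w i) = 1 → 0 ≤ F w + lam * G w := by
    intro w hs
    rcases lt_trichotomy (G w) 0 with hGw | hGw | hGw
    · -- feasible: lam ≤ F w / (-G w)
      have hFw : 0 ≤ F w := by
        simp only [hF, sub_nonneg]
        exact hw_min w (hGle w hGw.le) hs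
      have : lam ≤ F w / (-G w) := by
        rw [hlam]
        apply csSup_le hSne
        intro r hr
        rcases hr with rfl | ⟨w', hs', hGw', rfl⟩
        · exact div_nonneg hFw (by linarith)
        · rw [div_le_div_iff₀ hGw' (by linarith)]
          have := pairing w w' hs hs' hGw hGw'
          nlinarith
      rw [le_div_iff₀ (by linarith : 0 < -G w)] at this
      nlinarith
    · have hFw : 0 ≤ F w := by
        simp only [hF, sub_nonneg]
        exact hw_min w (hGle w hGw.le) hs
      rw [hGw]; linarith
    · have hmem : -F w / G w ∈ S := Set.mem_insert_of_mem _ ⟨w, hs, hGw, rfl⟩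
      have : -F w / G w ≤ lam := hlam ▸ le_csSup hbdd hmem
      rw [div_le_iff₀ hGw] at this
      nlinarith
  -- construct ζ
  refine ⟨lam / (1 + lam), ⟨by positivity, ?_⟩, ?_⟩
  · rw [div_lt_one (by linarith)]; linarith
  · intro w hs
    have h1 : (0:ℝ) < 1 + lam := by linarith
    have key' : f w_hat + lam * g w_hat ^ 2 ≤ f w + lam * g w ^ 2 := by
      have h2 := hkey w hs
      have h3 : g w_hat ^ 2 ≤ Δ ^ 2 := by
        nlinarith [hg0 w_hat, hw_feas.1]
      simp only [hF, hG] at h2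
      nlinarith
    have ecom : ∀ a c : ℝ, (1 - lam / (1 + lam)) * a + lam / (1 + lam) * c
        = (a + lam * c) / (1 + lam) := by
      intro a c
      have hz1 : 1 - lam / (1 + lam) = 1 / (1 + lam) := by
        rw [eq_div_iff h1.ne', sub_mul, div_mul_cancel₀ _ h1.ne', one_mul]
        ring
      rw [hz1, one_div_mul_eq_div, div_mul_eq_mul_div, ← add_div]
    rw [ecom, ecom]
    gcongr
end
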